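/- If Atm₀ is countably infinite, a formula φ is satisfiable in a finite MDM if and only if it is satisfiable in a finite quasi-MDM (an MDM possibly violating the functionality constraint C2). -/

import Mathlib

/-- Formulas of the language L of PLC. -/
inductive Form (Atm Val : Type) : Type
  | atom : Atm → Form Atm Val
  | dec  : Val → Form Atm Val
  | neg  : Form Atm Val → Form Atm Val
  | and  : Form Atm Val → Form Atm Val → Form Atm Val
  | boxI : Form Atm Val → Form Atm Val
  | boxF : Form Atm Val → Form Atm Val

variable {Atm Val : Type}

def Form.impl (φ ψ : Form Atm Val) : Form Atm Val := .neg (.and φ (.neg ψ))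

/-- Satisfaction at a pointed MCM (Γ,s,f) with Γ = (S,Φ). -/
def Sat (S : Set (Set Atm)) (Φ : Set ((Set Atm) → Val)) :
    Set Atm → ((Set Atm) → Val) → Form Atm Val → Prop
  | s, _, .atom p => p ∈ s
  | s, f, .dec x => f s = x
  | s, f, .neg φ => ¬ Sat S Φ s f φ
  | s, f, .and φ ψ => Sat S Φ s f φ ∧ Sat S Φ s f ψ
  | _, f, .boxI φ => ∀ s' ∈ S, Sat S Φ s' f φ
  | s, _, .boxF φ => ∀ f' ∈ Φ, Sat S Φ s f' φ

/-- A quasi-MDM: like an MDM but possibly violating the functionality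
constraint C2. -/
structure QMDM (Atm Val : Type) where
  W : Type
  RI : W → W → Prop
  RF : W → W → Prop
  equivI : Equivalence RI
  equivF : Equivalence RF
  VA : W → Set Atm
  VD : W → Set Val
  /-- C1: the relations commute. -/
  C1 : ∀ w v, (∃ u, RI w u ∧ RF u v) ↔ (∃ u, RF w u ∧ RI u v)
  /-- C3: ∼F-related worlds agree on atoms. -/
  C3 : ∀ w v, RF w v → VA w = VA v
  /-- C4: at most one decision atom per world. -/
  C4 : ∀ w, ∀ x y : Val, x ∈ VD w → y ∈ VD w → x = y
  /-- C5: at least one decision atom per world. -/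
  C5 : ∀ w, ∃ x : Val, x ∈ VD w

/-- The functionality constraint C2; a quasi-MDM satisfying it is an MDM. -/
def QMDM.FunctC2 (M : QMDM Atm Val) : Prop :=
  ∀ w v, M.VA w = M.VA v → M.RI w v → M.VD w = M.VD v

/-- Kripke satisfaction in a quasi-MDM. -/
def QSat (M : QMDM Atm Val) : M.W → Form Atm Val → Prop
  | w, .atom p => p ∈ M.VA w
  | w, .dec x => x ∈ M.VD w
  | w, .neg φ => ¬ QSat M w φ
  | w, .and φ ψ => QSat M w φ ∧ QSat M w ψ
  | w, .boxI φ => ∀ v, M.RI w v → QSat M v φ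
  | w, .boxF φ => ∀ v, M.RF w v → QSat M v φ

/-
Restrict a quasi-MDM `M` to the worlds `∼I ∘ ∼F`-reachable from the point of evaluation `w₀`;
by C1 every `∼F`-class of this component meets every `∼I`-class.  Build a grid whose rows and columns are
the worlds of the component, each tagged with a bit, and put at cell `(r, c)` a world of `M` lying in the
`∼F`-class of `r` and the `∼I`-class of `c`: the world `r` itself if the tags agree and `r ∼I c`, the
world `c` if the tags differ and `r ∼F c`.  In the grid model two worlds are `∼F`-related iff they share
a row and `∼I`-related iff they share a column, so C1 holds, and tagging each row with its own fresh atom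
makes C2 trivial.  The tags make every `∼F`-class of `M` appear along each row and every `∼I`-class
along each column, so the cell map is a bounded morphism and preserves the formulas over `Atm(φ)`.
-/

open Set Function

def Form.atoms : Form Atm Val → Set Atm
  | .atom p => {p}
  | .dec _ => ∅
  | .neg φ => φ.atoms
  | .and φ ψ => φ.atoms ∪ ψ.atoms
  | .boxI φ => φ.atoms
  | .boxF φ => φ.atoms

theorem Form.atoms_finite (φ : Form Atm Val) : φ.atoms.Finite := by
  induction φ with
  | atom p => exact finite_singleton p
  | dec _ => exact finite_empty
  | and _ _ ih₁ ih₂ => exact ih₁.union ih₂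
  | neg _ ih | boxI _ ih | boxF _ ih => exact ih

theorem Set.Finite.exists_injective_disjoint_range {α : Type*} [Infinite α] {S : Set α}
    (hS : S.Finite) (T : Type*) [Finite T] : ∃ g : T → α, Injective g ∧ Disjoint (range g) S := by
  obtain ⟨f, hf⟩ := Countable.exists_injective_nat T
  let e := hS.infinite_compl.natEmbedding
  refine ⟨fun t => e (f t), fun a b h => hf (e.injective (Subtype.ext h)), ?_⟩
  rw [disjoint_left]
  rintro _ ⟨t, rfl⟩
  exact (e (f t)).2

namespace QMDM

structure IsBoundedMorphism (P : Set Atm) (N M : QMDM Atm Val) (f : N.W → M.W) : Prop where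
  mem_VA_iff : ∀ x, ∀ p ∈ P, p ∈ N.VA x ↔ p ∈ M.VA (f x)
  VD_eq : ∀ x, N.VD x = M.VD (f x)
  RI_map : ∀ x y, N.RI x y → M.RI (f x) (f y)
  RF_map : ∀ x y, N.RF x y → M.RF (f x) (f y)
  exists_RI : ∀ x d, M.RI (f x) d → ∃ y, N.RI x y ∧ f y = d
  exists_RF : ∀ x d, M.RF (f x) d → ∃ y, N.RF x y ∧ f y = d

theorem IsBoundedMorphism.qsat_iff {P : Set Atm} {N M : QMDM Atm Val} {f : N.W → M.W}
    (hf : IsBoundedMorphism P N M f) {φ : Form Atm Val} (hφ : φ.atoms ⊆ P) (x : N.W) :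
    QSat N x φ ↔ QSat M (f x) φ := by
  induction φ generalizing x with
  | atom p => exact hf.mem_VA_iff x p (hφ rfl)
  | dec v => exact iff_of_eq (congrArg (v ∈ ·) (hf.VD_eq x))
  | neg _ ih => exact not_congr (ih hφ x)
  | and _ _ ih₁ ih₂ =>
    exact and_congr (ih₁ (subset_union_left.trans hφ) x) (ih₂ (subset_union_right.trans hφ) x)
  | boxI _ ih =>
    refine ⟨fun h d hd => ?_, fun h y hy => (ih hφ y).2 (h _ (hf.RI_map x y hy))⟩
    obtain ⟨y, hy, rfl⟩ := hf.exists_RI x d hd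
    exact (ih hφ y).1 (h y hy)
  | boxF _ ih =>
    refine ⟨fun h d hd => ?_, fun h y hy => (ih hφ y).2 (h _ (hf.RF_map x y hy))⟩
    obtain ⟨y, hy, rfl⟩ := hf.exists_RF x d hd
    exact (ih hφ y).1 (h y hy)

variable (M : QMDM Atm Val)

structure IsGrid {R C : Type} (pt : R → C → M.W) : Prop where
  RF_row : ∀ r c c', M.RF (pt r c) (pt r c')
  RI_col : ∀ r r' c, M.RI (pt r c) (pt r' c)
  exists_row_eq : ∀ r c d, M.RF (pt r c) d → ∃ c', pt r c' = d
  exists_col_eq : ∀ r c d, M.RI (pt r c) d → ∃ r', pt r' c = d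

def gridModel {R C : Type} {pt : R → C → M.W} (hpt : M.IsGrid pt) (g : R → Atm) :
    QMDM Atm Val where
  W := R × C
  RI x y := x.2 = y.2
  RF x y := x.1 = y.1
  equivI := ⟨fun _ => rfl, Eq.symm, Eq.trans⟩
  equivF := ⟨fun _ => rfl, Eq.symm, Eq.trans⟩
  VA x := insert (g x.1) (M.VA (pt x.1 x.2) \ range g)
  VD x := M.VD (pt x.1 x.2)
  C1 x y := ⟨fun _ => ⟨(x.1, y.2), rfl, rfl⟩, fun _ => ⟨(y.1, x.2), rfl, rfl⟩⟩
  C3 x y (h : x.1 = y.1) := by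
    rw [← h, M.C3 _ _ (hpt.RF_row x.1 x.2 y.2)]
  C4 x := M.C4 _
  C5 x := M.C5 _

variable {M}

theorem functC2_gridModel {R C : Type} {pt : R → C → M.W} (hpt : M.IsGrid pt) {g : R → Atm}
    (hg : Injective g) : (M.gridModel hpt g).FunctC2 := by
  rintro ⟨r, c⟩ ⟨r', c'⟩ hVA (rfl : c = c')
  have hr : g r ∈ (M.gridModel hpt g).VA (r', c) := hVA ▸ mem_insert _ _
  obtain rfl : r = r' := hg (hr.resolve_right fun h => h.2 (mem_range_self r))
  rfl

theorem isBoundedMorphism_gridModel {R C : Type} {pt : R → C → M.W} (hpt : M.IsGrid pt)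
    (g : R → Atm) :
    IsBoundedMorphism (range g)ᶜ (M.gridModel hpt g) M (fun x => pt x.1 x.2) where
  mem_VA_iff x p hp := by
    simp only [gridModel, mem_insert_iff, mem_sdiff]
    exact ⟨fun h => (h.resolve_left fun h' => hp ⟨_, h'.symm⟩).1, fun h => .inr ⟨h, hp⟩⟩
  VD_eq _ := rfl
  RI_map := by rintro ⟨r, c⟩ ⟨r', _⟩ rfl; exact hpt.RI_col r r' c
  RF_map := by rintro ⟨r, c⟩ ⟨_, c'⟩ rfl; exact hpt.RF_row r c c'
  exists_RI := by
    rintro ⟨r, c⟩ d hd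
    obtain ⟨r', rfl⟩ := hpt.exists_col_eq r c d hd
    exact ⟨(r', c), rfl, rfl⟩
  exists_RF := by
    rintro ⟨r, c⟩ d hd
    obtain ⟨c', rfl⟩ := hpt.exists_row_eq r c d hd
    exact ⟨(r, c'), rfl, rfl⟩

variable (M)

def component (w₀ : M.W) : Set M.W := {w | ∃ m, M.RI w₀ m ∧ M.RF m w}

variable {M} {w₀ : M.W}

theorem mem_component_self : w₀ ∈ M.component w₀ := ⟨w₀, M.equivI.refl w₀, M.equivF.refl w₀⟩

theorem mem_component_of_RF {u v : M.W} (hu : u ∈ M.component w₀) (h : M.RF u v) :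
    v ∈ M.component w₀ :=
  let ⟨m, hm, hmu⟩ := hu
  ⟨m, hm, M.equivF.trans hmu h⟩

theorem mem_component_of_RI {u v : M.W} (hu : u ∈ M.component w₀) (h : M.RI u v) :
    v ∈ M.component w₀ := by
  obtain ⟨m, hm, hmu⟩ := hu
  obtain ⟨m', hmm', hm'v⟩ := (M.C1 m v).2 ⟨u, hmu, h⟩
  exact ⟨m', M.equivI.trans hm hmm', hm'v⟩

theorem exists_RF_RI_of_mem_component {a b : M.W} (ha : a ∈ M.component w₀)
    (hb : b ∈ M.component w₀) : ∃ c, M.RF a c ∧ M.RI c b := by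
  obtain ⟨m, hm, hma⟩ := ha
  obtain ⟨n, hn, hnb⟩ := hb
  obtain ⟨c, hmc, hcb⟩ := (M.C1 m b).1 ⟨n, M.equivI.trans (M.equivI.symm hm) hn, hnb⟩
  exact ⟨c, M.equivF.trans (M.equivF.symm hma) hmc, hcb⟩

variable (M w₀)

open Classical in
noncomputable def gridPt (r c : M.component w₀ × Bool) : M.W :=
  if r.2 = c.2 ∧ M.RI r.1 c.1 then r.1
  else if r.2 ≠ c.2 ∧ M.RF r.1 c.1 then c.1
  else (exists_RF_RI_of_mem_component r.1.2 c.1.2).choose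

variable {M w₀}

theorem gridPt_spec (r c : M.component w₀ × Bool) :
    M.RF r.1 (M.gridPt w₀ r c) ∧ M.RI (M.gridPt w₀ r c) c.1 := by
  unfold gridPt
  split_ifs with h₁ h₂
  · exact ⟨M.equivF.refl _, h₁.2⟩
  · exact ⟨h₂.2, M.equivI.refl _⟩
  · exact (exists_RF_RI_of_mem_component r.1.2 c.1.2).choose_spec

theorem gridPt_of_RI {r c : M.component w₀ × Bool} (ht : r.2 = c.2) (h : M.RI r.1 c.1) :
    M.gridPt w₀ r c = r.1 :=
  if_pos ⟨ht, h⟩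

theorem gridPt_of_RF {r c : M.component w₀ × Bool} (ht : r.2 ≠ c.2) (h : M.RF r.1 c.1) :
    M.gridPt w₀ r c = c.1 := by
  rw [gridPt, if_neg fun h' => ht h'.1, if_pos ⟨ht, h⟩]

theorem isGrid_gridPt : M.IsGrid (M.gridPt w₀) where
  RF_row r c c' := M.equivF.trans (M.equivF.symm (gridPt_spec r c).1) (gridPt_spec r c').1
  RI_col r r' c := M.equivI.trans (gridPt_spec r c).2 (M.equivI.symm (gridPt_spec r' c).2)
  exists_row_eq r c d hd := by
    have hrd := M.equivF.trans (gridPt_spec r c).1 hd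
    exact ⟨(⟨d, mem_component_of_RF r.1.2 hrd⟩, !r.2), gridPt_of_RF (Bool.self_ne_not _) hrd⟩
  exists_col_eq r c d hd := by
    have hdc := M.equivI.trans (M.equivI.symm hd) (gridPt_spec r c).2
    exact ⟨(⟨d, mem_component_of_RI c.1.2 (M.equivI.symm hdc)⟩, c.2), gridPt_of_RI rfl hdc⟩

end QMDM

open QMDM in
theorem finite_mdm_sat_iff_finite_qmdm_sat_general [Infinite Atm]
    (φ : Form Atm Val) :
    (∃ M : QMDM Atm Val, Finite M.W ∧ M.FunctC2 ∧ ∃ w : M.W, QSat M w φ) ↔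
    (∃ M : QMDM Atm Val, Finite M.W ∧ ∃ w : M.W, QSat M w φ) := by
  refine ⟨fun ⟨M, hfin, _, hsat⟩ => ⟨M, hfin, hsat⟩, fun ⟨M, hfin, w₀, hw₀⟩ => ?_⟩
  let root : M.component w₀ × Bool := (⟨w₀, mem_component_self⟩, false)
  obtain ⟨g, hg, hfresh⟩ := φ.atoms_finite.exists_injective_disjoint_range (M.component w₀ × Bool)
  refine ⟨M.gridModel isGrid_gridPt g, Finite.instProd, functC2_gridModel isGrid_gridPt hg,
    (root, root), ?_⟩
  refine ((isBoundedMorphism_gridModel isGrid_gridPt g).qsat_iff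
    (subset_compl_iff_disjoint_left.2 hfresh) _).2 ?_
  rwa [gridPt_of_RI rfl (M.equivI.refl w₀)]

/-- when Atm₀ is countably infinite, satisfiability in a finite MDM
(a finite quasi-MDM satisfying C2) coincides with satisfiability in a finite
quasi-MDM. -/
theorem finite_mdm_sat_iff_finite_qmdm_sat [Countable Atm] [Infinite Atm]
    (φ : Form Atm Val) :
    (∃ M : QMDM Atm Val, Finite M.W ∧ M.FunctC2 ∧ ∃ w : M.W, QSat M w φ) ↔
    (∃ M : QMDM Atm Val, Finite M.W ∧ ∃ w : M.W, QSat M w φ) :=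
  finite_mdm_sat_iff_finite_qmdm_sat_general φ
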